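/- arXiv:1312.1378 — 2 statements merged into one kernel-verified Lean document; each statement's English description precedes it below -/
import Mathlib

section
/- Let (r_t)_{t ∈ ℤ} be a stationary N-valued stochastic process, let s(T) = E[w(0,T)] denote the average working-set size, and let m(T) = P(r_1 ∉ {r_s : 1−T ≤ s ≤ 0}) denote the miss rate with window size T. Then the miss rate is the (discrete) derivative of the average working-set size: m(T) = s(T+1) − s(T) for every T ≥ 0. -/
open MeasureTheory

/-- The working set `W(t,T)` of a reference string: the set of distinct units
referenced in the window `[t-T+1, t]`. -/
noncomputable def workingSet {N : Type*} [DecidableEq N] (r : ℤ → N) (t : ℤ) (T : ℕ) : Finset N :=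
  (Finset.Icc (t - T + 1) t).image r

/-!
The window of length `T + 1` ending at time `1` is the window of length `T` ending at `0`
together with the reference `r 1`, so pointwise `w(1, T+1) = w(0, T) + 1{r 1 ∉ W(0, T)}`.
Taking expectations, and replacing `E w(1, T+1)` by `E w(0, T+1)` by stationarity, gives
`s(T+1) = s(T) + m(T)`. The argument is carried out for the law of the path on `ℤ → N`;
all quantities involved depend on finitely many coordinates of a path with values in a
countable set, which makes them measurable.
-/

theorem DependsOn.measurable_of_countable {ι N β : Type*} [MeasurableSpace N]
    [Countable N] [MeasurableSingletonClass N] [MeasurableSpace β] [Nonempty β]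
    {f : (ι → N) → β} {s : Set ι} (hs : s.Finite) (hf : DependsOn f s) : Measurable f := by
  have := hs.to_subtype
  obtain ⟨g, rfl⟩ := dependsOn_iff_exists_comp.mp hf
  exact (_root_.measurable_of_countable g).comp
    (measurable_pi_lambda _ fun i => measurable_pi_apply (i : ι))

section WorkingSet

variable {N : Type*} [DecidableEq N]

theorem dependsOn_workingSet (t : ℤ) (T : ℕ) :
    DependsOn (fun g : ℤ → N => workingSet g t T) (Finset.Icc (t - T + 1) t : Set ℤ) :=
  fun _ _ h => Finset.image_congr fun _ hs => h _ hs

theorem workingSet_comp_add_one (g : ℤ → N) (t : ℤ) (T : ℕ) :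
    workingSet (fun s => g (s + 1)) t T = workingSet g (t + 1) T := by
  have : Finset.Icc (t + 1 - T + 1) (t + 1)
      = (Finset.Icc (t - T + 1) t).map (addRightEmbedding 1) := by
    rw [Finset.map_add_right_Icc]; ring_nf
  rw [workingSet, workingSet, this, Finset.map_eq_image, Finset.image_image]
  rfl

theorem workingSet_succ_succ (g : ℤ → N) (t : ℤ) (T : ℕ) :
    workingSet g (t + 1) (T + 1) = insert (g (t + 1)) (workingSet g t T) := by
  have : Finset.Icc (t + 1 - ↑(T + 1) + 1) (t + 1)
      = insert (t + 1) (Finset.Icc (t - T + 1) t) := by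
    ext; simp only [Finset.mem_Icc, Finset.mem_insert]; omega
  rw [workingSet, this, Finset.image_insert]
  rfl

theorem card_workingSet_succ_succ (g : ℤ → N) (t : ℤ) (T : ℕ) :
    ((workingSet g (t + 1) (T + 1)).card : ℝ) = (workingSet g t T).card
      + {g : ℤ → N | g (t + 1) ∉ workingSet g t T}.indicator 1 g := by
  rw [workingSet_succ_succ, Finset.card_insert_eq_ite]
  by_cases h : g (t + 1) ∈ workingSet g t T <;> simp [h]

end WorkingSet

section PathSpace

variable {N : Type*} [DecidableEq N] [MeasurableSpace N] [Countable N] [MeasurableSingletonClass N]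

theorem measurable_card_workingSet (t : ℤ) (T : ℕ) :
    Measurable fun g : ℤ → N => ((workingSet g t T).card : ℝ) :=
  DependsOn.measurable_of_countable (Finset.finite_toSet _)
    fun _ _ h => congrArg (fun W : Finset N => (W.card : ℝ)) (dependsOn_workingSet t T h)

theorem measurableSet_notMem_workingSet (t : ℤ) (T : ℕ) :
    MeasurableSet {g : ℤ → N | g (t + 1) ∉ workingSet g t T} := by
  refine measurableSet_setOfPred.mpr <|
    DependsOn.measurable_of_countable (s := insert (t + 1) (Finset.Icc (t - T + 1) t : Set ℤ))
      ((Finset.finite_toSet _).insert _) fun g g' h => ?_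
  simp only [h _ (Set.mem_insert _ _),
    dependsOn_workingSet t T fun s hs => h s (Set.mem_insert_of_mem _ hs)]

theorem integrable_card_workingSet (ν : Measure (ℤ → N)) [IsFiniteMeasure ν]
    (t : ℤ) (T : ℕ) :
    Integrable (fun g => ((workingSet g t T).card : ℝ)) ν := by
  refine .of_bound (measurable_card_workingSet t T).aestronglyMeasurable T
    (.of_forall fun g => ?_)
  have : (workingSet g t T).card ≤ T :=
    Finset.card_image_le.trans_eq <| by rw [Int.card_Icc]; omega
  simpa using this

theorem measureReal_notMem_workingSet_eq_integral_sub
    {ν : Measure (ℤ → N)} [IsFiniteMeasure ν] (hν : ν.map (fun g t => g (t + 1)) = ν)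
    (t : ℤ) (T : ℕ) :
    ν.real {g | g (t + 1) ∉ workingSet g t T}
      = ∫ g, ((workingSet g t (T + 1)).card : ℝ) ∂ν
        - ∫ g, ((workingSet g t T).card : ℝ) ∂ν := by
  have hshift : Measurable fun (g : ℤ → N) t => g (t + 1) := by fun_prop
  have hstationary : ∫ g, ((workingSet g t (T + 1)).card : ℝ) ∂ν
      = ∫ g, ((workingSet g (t + 1) (T + 1)).card : ℝ) ∂ν := by
    conv_lhs => rw [← hν]
    rw [integral_map hshift.aemeasurable
      (measurable_card_workingSet t (T + 1)).aestronglyMeasurable]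
    simp only [workingSet_comp_add_one]
  have hmiss := measurableSet_notMem_workingSet (N := N) t T
  have hmiss_int :
      Integrable ({g | g (t + 1) ∉ workingSet g t T}.indicator (1 : (ℤ → N) → ℝ)) ν :=
    (integrable_const 1).indicator hmiss
  rw [hstationary, integral_congr_ae (.of_forall (card_workingSet_succ_succ · t T)),
    integral_add (integrable_card_workingSet ν t T) hmiss_int, integral_indicator_one hmiss]
  ring

end PathSpace

/-- For a stationary `N`-valued process, the miss rate
`m(T) = P(r 1 ∉ W(0,T))` is the discrete derivative of the average working-set size
`s(T) = E[w(0,T)]`:  `m(T) = s(T+1) - s(T)` for all `T ≥ 0`. -/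
theorem missRate_eq_discrete_deriv_avg_workingSetSize
    {Ω : Type*} [MeasurableSpace Ω] (μ : Measure Ω) [IsProbabilityMeasure μ]
    {N : Type*} [Fintype N] [DecidableEq N] [MeasurableSpace N] [MeasurableSingletonClass N]
    (r : ℤ → Ω → N) (hmeas : ∀ t, Measurable (r t))
    (hstat : Measure.map (fun ω => fun t : ℤ => r (t + 1) ω) μ
           = Measure.map (fun ω => fun t : ℤ => r t ω) μ)
    (T : ℕ) :
    (μ {ω | r 1 ω ∉ workingSet (fun s => r s ω) 0 T}).toReal
      = (∫ ω, ((workingSet (fun s => r s ω) 0 (T + 1)).card : ℝ) ∂μ)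
        - ∫ ω, ((workingSet (fun s => r s ω) 0 T).card : ℝ) ∂μ := by
  set path : Ω → ℤ → N := fun ω t => r t ω
  have hpath : Measurable path := measurable_pi_lambda _ hmeas
  have hshift : Measurable fun (g : ℤ → N) t => g (t + 1) := by fun_prop
  have hlaw : (μ.map path).map (fun g t => g (t + 1)) = μ.map path := by
    rwa [Measure.map_map hshift hpath]
  have key := measureReal_notMem_workingSet_eq_integral_sub hlaw 0 T
  rwa [measureReal_def, Measure.map_apply hpath (measurableSet_notMem_workingSet 0 T),
    integral_map hpath.aemeasurable (measurable_card_workingSet 0 (T + 1)).aestronglyMeasurable,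
    integral_map hpath.aemeasurable (measurable_card_workingSet 0 T).aestronglyMeasurable,
    zero_add] at key
end

section
/- Let (r_t)_{t ∈ ℤ} be a stationary N-valued stochastic process and m(T) = P(r_1 ∉ {r_s : 1−T ≤ s ≤ 0}) the miss rate. Then the sign-inverted discrete slope of the miss rate equals the interreference distance density: for every T ≥ 0, m(T) − m(T+1) = P( r_1 = r_{−T} and r_1 ∉ {r_s : 1−T ≤ s ≤ 0} ), i.e. the probability that the next reference repeats a unit at backward distance exactly T+1; in particular m(T) − m(T+1) ≥ 0. -/
/-!
Extending the window by one step adds exactly the unit `r (-T)` to the working set: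
`W(0, T+1) = insert (r (-T)) W(0, T)`. Hence the event of a miss with window `T` splits
disjointly into a miss with window `T+1` and the event that `r 1` misses `W(0, T)` but equals
`r (-T)`; taking probabilities gives the slope identity, and its right-hand side is a
probability, hence nonnegative.
-/

open MeasureTheory

theorem workingSet_succ {N : Type*} [DecidableEq N] (r : ℤ → N) (t : ℤ) (T : ℕ) :
    workingSet r t (T + 1) = insert (r (t - T)) (workingSet r t T) := by
  have hwindow :
      Finset.Icc (t - (T + 1 : ℕ) + 1) t = insert (t - T) (Finset.Icc (t - T + 1) t) := by
    rw [← Order.succ_eq_add_one (t - T), Finset.insert_Icc_succ_left_eq_Icc (by omega)]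
    congr 1
    push_cast
    ring
  rw [workingSet, workingSet, hwindow, Finset.image_insert]

theorem notMem_workingSet_succ_iff {N : Type*} [DecidableEq N] {r : ℤ → N} {t : ℤ} {T : ℕ}
    {a : N} : a ∉ workingSet r t (T + 1) ↔ a ≠ r (t - T) ∧ a ∉ workingSet r t T := by
  rw [workingSet_succ, Finset.mem_insert, not_or]

theorem missRate_slope_eq_interreference_density_general
    {Ω : Type*} [MeasurableSpace Ω] (μ : Measure Ω) [IsProbabilityMeasure μ]
    {N : Type*} [Fintype N] [DecidableEq N] [MeasurableSpace N] [MeasurableSingletonClass N]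
    (r : ℤ → Ω → N) (hmeas : ∀ t, Measurable (r t))
    (m : ℕ → ℝ)
    (hm : ∀ T : ℕ, m T = (μ {ω | r 1 ω ∉ workingSet (fun u => r u ω) 0 T}).toReal)
    (T : ℕ) :
    m T - m (T + 1)
      = (μ {ω | r 1 ω = r (-(T : ℤ)) ω ∧ r 1 ω ∉ workingSet (fun u => r u ω) 0 T}).toReal ∧
    0 ≤ m T - m (T + 1) := by
  simp only [hm, ← measureReal_def]
  set miss : Set Ω := {ω | r 1 ω ∉ workingSet (fun u => r u ω) 0 T}
  set repeats : Set Ω := {ω | r 1 ω = r (-(T : ℤ)) ω}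
  have hsplit : μ.real (miss ∩ repeats) + μ.real (miss \ repeats) = μ.real miss :=
    measureReal_inter_add_sdiff₀ (measurableSet_eq_fun (hmeas 1) (hmeas _)).nullMeasurableSet
  have hmiss_next : miss \ repeats = {ω | r 1 ω ∉ workingSet (fun u => r u ω) 0 (T + 1)} := by
    ext ω
    simp [miss, repeats, notMem_workingSet_succ_iff, and_comm]
  have hmiss_repeat : miss ∩ repeats
      = {ω | r 1 ω = r (-(T : ℤ)) ω ∧ r 1 ω ∉ workingSet (fun u => r u ω) 0 T} :=
    Set.inter_comm _ _
  rw [← hmiss_repeat, ← hmiss_next]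
  exact ⟨by linarith, by linarith [measureReal_nonneg (μ := μ) (s := miss ∩ repeats)]⟩

/-- For a stationary `N`-valued process with miss rate
`m(T) = P(r 1 ∉ W(0,T))`, the sign-inverted discrete slope of the miss rate equals
the interreference-distance density: for every `T ≥ 0`,
`m(T) - m(T+1) = P(r 1 = r (-T) ∧ r 1 ∉ W(0,T))`,
the probability that the next reference repeats a unit at backward distance exactly
`T+1`; in particular `m(T) - m(T+1) ≥ 0`. -/
theorem missRate_slope_eq_interreference_density
    {Ω : Type*} [MeasurableSpace Ω] (μ : Measure Ω) [IsProbabilityMeasure μ]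
    {N : Type*} [Fintype N] [DecidableEq N] [MeasurableSpace N] [MeasurableSingletonClass N]
    (r : ℤ → Ω → N) (hmeas : ∀ t, Measurable (r t))
    (hstat : Measure.map (fun ω => fun t : ℤ => r (t + 1) ω) μ
           = Measure.map (fun ω => fun t : ℤ => r t ω) μ)
    (m : ℕ → ℝ)
    (hm : ∀ T : ℕ, m T = (μ {ω | r 1 ω ∉ workingSet (fun u => r u ω) 0 T}).toReal)
    (T : ℕ) :
    m T - m (T + 1)
      = (μ {ω | r 1 ω = r (-(T : ℤ)) ω ∧ r 1 ω ∉ workingSet (fun u => r u ω) 0 T}).toReal ∧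
    0 ≤ m T - m (T + 1) :=
  missRate_slope_eq_interreference_density_general μ r hmeas m hm T
end
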